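/- arXiv:2012.13634 — 3 statements merged into one kernel-verified Lean document; each statement's English description precedes it below -/
import Mathlib

section
/- Suppose that ψ, α and β are continuous, that for each x ∈ ℝ^{n-k} the map y ↦ ψ(x,y) is injective on D^k, and that for every t ∈ [0,1] either α(t) = 1 or β(t) = 1. Then the restriction of ι_ψ to the compact set D^{n-k} × D^k × [0,1] is a closed topological embedding (a homeomorphism onto its closed image). -/
/-! The restriction is a continuous injection from a compact space into a Hausdorff space, hence a
closed embedding. Injectivity: `x` and `t` are read off directly; then either `α t = 1` and the
second coordinate is `y`, or `β t = 1` and the third is `ψ (x, y)`, which determines `y` on the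
ball. -/

noncomputable section

/-- The explicit map `ι_ψ (x, y, t) = (x, α(t)·y, β(t)·ψ(x,y), t)` from
`ℝ^{n-k} × ℝ^k × ℝ` to `ℝ^{n-k} × ℝ^k × ℝ^k × ℝ`. -/
def iota {n k : ℕ}
    (ψ : EuclideanSpace ℝ (Fin (n - k)) × EuclideanSpace ℝ (Fin k) → EuclideanSpace ℝ (Fin k))
    (α β : ℝ → ℝ) :
    EuclideanSpace ℝ (Fin (n - k)) × EuclideanSpace ℝ (Fin k) × ℝ →
      EuclideanSpace ℝ (Fin (n - k)) × EuclideanSpace ℝ (Fin k) × EuclideanSpace ℝ (Fin k) × ℝ :=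
  fun p => (p.1, α p.2.2 • p.2.1, β p.2.2 • ψ (p.1, p.2.1), p.2.2)

section Iota

variable {n k : ℕ}
  {ψ : EuclideanSpace ℝ (Fin (n - k)) × EuclideanSpace ℝ (Fin k) → EuclideanSpace ℝ (Fin k)}
  {α β : ℝ → ℝ}

theorem continuous_iota (hψ : Continuous ψ) (hα : Continuous α) (hβ : Continuous β) :
    Continuous (iota ψ α β) := by
  unfold iota
  fun_prop

theorem injOn_iota {B : Set (EuclideanSpace ℝ (Fin k))} {T : Set ℝ}
    (hψ : ∀ x, Set.InjOn (fun y => ψ (x, y)) B) (hαβ : ∀ t ∈ T, α t = 1 ∨ β t = 1) :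
    Set.InjOn (iota ψ α β) (Set.univ ×ˢ B ×ˢ T) := by
  rintro ⟨x, y, t⟩ ⟨-, hy, ht⟩ ⟨x', y', t'⟩ ⟨-, hy', -⟩ h
  simp only [iota, Prod.mk.injEq] at h
  obtain ⟨rfl, hαy, hβψ, rfl⟩ := h
  have hyy' : y = y' := by
    rcases hαβ t ht with hα | hβ
    · simpa only [hα, one_smul] using hαy
    · exact hψ x hy hy' (by simpa only [hβ, one_smul] using hβψ)
  rw [hyy']

end Iota

theorem iota_closedEmbedding_general (n k : ℕ)
    (ψ : EuclideanSpace ℝ (Fin (n - k)) × EuclideanSpace ℝ (Fin k) → EuclideanSpace ℝ (Fin k))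
    (α β : ℝ → ℝ)
    (hψc : Continuous ψ) (hαc : Continuous α) (hβc : Continuous β)
    (hψ : ∀ x, Set.InjOn (fun y => ψ (x, y))
      (Metric.closedBall (0 : EuclideanSpace ℝ (Fin k)) 1))
    (hαβ : ∀ t ∈ Set.Icc (0 : ℝ) 1, α t = 1 ∨ β t = 1) :
    Topology.IsClosedEmbedding
      ((Metric.closedBall (0 : EuclideanSpace ℝ (Fin (n - k))) 1 ×ˢ
        Metric.closedBall (0 : EuclideanSpace ℝ (Fin k)) 1 ×ˢ
          Set.Icc (0 : ℝ) 1).restrict (iota ψ α β)) := by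
  have hcompact : IsCompact (Metric.closedBall (0 : EuclideanSpace ℝ (Fin (n - k))) 1 ×ˢ
      Metric.closedBall (0 : EuclideanSpace ℝ (Fin k)) 1 ×ˢ Set.Icc (0 : ℝ) 1) :=
    (isCompact_closedBall _ _).prod ((isCompact_closedBall _ _).prod isCompact_Icc)
  have := isCompact_iff_compactSpace.mp hcompact
  refine ((continuous_iota hψc hαc hβc).comp continuous_subtype_val).isClosedEmbedding ?_
  exact Set.injOn_iff_injective.mp <|
    (injOn_iota hψ hαβ).mono (Set.prod_mono (Set.subset_univ _) subset_rfl)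

/-- If moreover `ψ`, `α`, `β` are continuous, then the restriction of `ι_ψ` to the
compact set `D^{n-k} × D^k × [0,1]` is a closed topological embedding
(a homeomorphism onto its closed image). -/
theorem iota_closedEmbedding (n k : ℕ) (hk : 1 ≤ k) (hkn : k < n)
    (ψ : EuclideanSpace ℝ (Fin (n - k)) × EuclideanSpace ℝ (Fin k) → EuclideanSpace ℝ (Fin k))
    (α β : ℝ → ℝ)
    (hψc : Continuous ψ) (hαc : Continuous α) (hβc : Continuous β)
    (hψ : ∀ x, Set.InjOn (fun y => ψ (x, y))
      (Metric.closedBall (0 : EuclideanSpace ℝ (Fin k)) 1))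
    (hαβ : ∀ t ∈ Set.Icc (0 : ℝ) 1, α t = 1 ∨ β t = 1) :
    Topology.IsClosedEmbedding
      ((Metric.closedBall (0 : EuclideanSpace ℝ (Fin (n - k))) 1 ×ˢ
        Metric.closedBall (0 : EuclideanSpace ℝ (Fin k)) 1 ×ˢ
          Set.Icc (0 : ℝ) 1).restrict (iota ψ α β)) :=
  iota_closedEmbedding_general n k ψ α β hψc hαc hβc hψ hαβ
end
end

section
/- Suppose that ψ : ℝ^{n-k} × ℝ^k → ℝ^k is continuously differentiable and α, β : ℝ → ℝ are continuously differentiable. Let (x,y,t) be a point such that the partial derivative of ψ in the y-direction at (x,y), a linear map ℝ^k → ℝ^k, is invertible, and such that α(t)² + β(t)² > 0. Then the Fréchet derivative of ι_ψ at (x,y,t) is an injective linear map ℝ^{n+1} → ℝ^{n+k+1}; i.e. ι_ψ is an immersion at (x,y,t). -/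
noncomputable section

/-! The derivative of `ι_ψ` at `(x, y, t)` sends `(u, v, s)` to
`(u, α t • v + (α' t * s) • y, β t • Dψ (u, v) + (β' t * s) • ψ (x, y), s)`.
If this vanishes then `u = 0` and `s = 0`, leaving `α t • v = 0` and `β t • ∂_yψ v = 0`;
as one of `α t`, `β t` is nonzero and `∂_yψ` is injective, `v = 0`. -/

open ContinuousLinearMap Function

section ScaledGraph

variable {𝕜 E F G : Type*} [NontriviallyNormedField 𝕜]
  [NormedAddCommGroup E] [NormedSpace 𝕜 E] [NormedAddCommGroup F] [NormedSpace 𝕜 F]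
  [NormedAddCommGroup G] [NormedSpace 𝕜 G]

def scaledGraph (ψ : E × F → G) (α β : 𝕜 → 𝕜) (p : E × F × 𝕜) : E × F × G × 𝕜 :=
  (p.1, α p.2.2 • p.2.1, β p.2.2 • ψ (p.1, p.2.1), p.2.2)

def scaledGraphFDeriv (ψ' : E × F →L[𝕜] G) (a b a' b' : 𝕜) (y : F) (z : G) :
    E × F × 𝕜 →L[𝕜] E × F × G × 𝕜 :=
  (fst 𝕜 E (F × 𝕜)).prod <|
    (a • (fst 𝕜 F 𝕜).comp (snd 𝕜 E (F × 𝕜)) +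
        (a' • (snd 𝕜 F 𝕜).comp (snd 𝕜 E (F × 𝕜))).smulRight y).prod <|
    (b • ψ'.comp ((fst 𝕜 E (F × 𝕜)).prod ((fst 𝕜 F 𝕜).comp (snd 𝕜 E (F × 𝕜)))) +
        (b' • (snd 𝕜 F 𝕜).comp (snd 𝕜 E (F × 𝕜))).smulRight z).prod
      ((snd 𝕜 F 𝕜).comp (snd 𝕜 E (F × 𝕜)))

variable {ψ : E × F → G} {α β : 𝕜 → 𝕜} {ψ' : E × F →L[𝕜] G} {a b a' b' : 𝕜} {x : E} {y : F}
  {z : G} {t : 𝕜}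

@[simp]
theorem scaledGraphFDeriv_apply (u : E) (v : F) (s : 𝕜) :
    scaledGraphFDeriv ψ' a b a' b' y z (u, v, s) =
      (u, a • v + (a' * s) • y, b • ψ' (u, v) + (b' * s) • z, s) := by
  simp [scaledGraphFDeriv]

theorem hasFDerivAt_scaledGraph (hψ : HasFDerivAt ψ ψ' (x, y)) (hα : HasDerivAt α a' t)
    (hβ : HasDerivAt β b' t) :
    HasFDerivAt (scaledGraph ψ α β) (scaledGraphFDeriv ψ' (α t) (β t) a' b' y (ψ (x, y)))
      (x, y, t) := by
  have hX := hasFDerivAt_fst (𝕜 := 𝕜) (p := (x, y, t))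
  have hY := (hasFDerivAt_snd (𝕜 := 𝕜) (p := (x, y, t))).fst
  have hT := (hasFDerivAt_snd (𝕜 := 𝕜) (p := (x, y, t))).snd
  have hαT := hα.hasFDerivAt.comp (x, y, t) hT
  have hβT := hβ.hasFDerivAt.comp (x, y, t) hT
  have hψXY := hψ.comp (x, y, t) (hX.prodMk hY)
  have h := hX.prodMk ((hαT.smul hY).prodMk ((hβT.smul hψXY).prodMk hT))
  refine h.congr_fderiv (ContinuousLinearMap.ext fun ⟨u, v, s⟩ => ?_)
  simp [mul_comm]

theorem scaledGraphFDeriv_injective (hψ' : Injective (ψ'.comp (inr 𝕜 E F)))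
    (hab : a ≠ 0 ∨ b ≠ 0) : Injective (scaledGraphFDeriv ψ' a b a' b' y z) := by
  refine (injective_iff_map_eq_zero _).2 fun ⟨u, v, s⟩ h => ?_
  simp only [scaledGraphFDeriv_apply, Prod.mk_eq_zero] at h
  obtain ⟨rfl, hv, hz, rfl⟩ := h
  simp only [mul_zero, zero_smul, add_zero] at hv hz
  suffices v = 0 by simp [this]
  rcases hab with ha | hb
  · exact (smul_eq_zero.1 hv).resolve_left ha
  · refine (injective_iff_map_eq_zero _).1 hψ' v ?_
    simpa using (smul_eq_zero.1 hz).resolve_left hb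

end ScaledGraph

theorem iota_fderiv_injective_general (n k : ℕ)
    (ψ : EuclideanSpace ℝ (Fin (n - k)) × EuclideanSpace ℝ (Fin k) → EuclideanSpace ℝ (Fin k))
    (α β : ℝ → ℝ)
    (hψ : ContDiff ℝ 1 ψ) (hα : ContDiff ℝ 1 α) (hβ : ContDiff ℝ 1 β)
    (x : EuclideanSpace ℝ (Fin (n - k))) (y : EuclideanSpace ℝ (Fin k)) (t : ℝ)
    (hB : Function.Bijective ⇑(fderiv ℝ (fun y' => ψ (x, y')) y))
    (hab : (α t) ^ 2 + (β t) ^ 2 > 0) :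
    Function.Injective ⇑(fderiv ℝ (iota ψ α β) (x, y, t)) := by
  have hψ' := (hψ.differentiable one_ne_zero (x, y)).hasFDerivAt
  have hα' := (hα.differentiable one_ne_zero t).hasDerivAt
  have hβ' := (hβ.differentiable one_ne_zero t).hasDerivAt
  have hpartial := hψ'.comp y (hasFDerivAt_prodMk_right x y)
  rw [show iota ψ α β = scaledGraph ψ α β from rfl, (hasFDerivAt_scaledGraph hψ' hα' hβ').fderiv]
  refine scaledGraphFDeriv_injective (hpartial.fderiv ▸ hB.injective) ?_
  by_contra! h
  simp [h.1, h.2] at hab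

/-- If the partial derivative of `ψ` in the `y`-direction at `(x, y)` is invertible and
`α(t)² + β(t)² > 0`, then the Fréchet derivative of `ι_ψ` at `(x, y, t)` is an injective
linear map, i.e. `ι_ψ` is an immersion at `(x, y, t)`. -/
theorem iota_fderiv_injective (n k : ℕ) (hk : 1 ≤ k) (hkn : k < n)
    (ψ : EuclideanSpace ℝ (Fin (n - k)) × EuclideanSpace ℝ (Fin k) → EuclideanSpace ℝ (Fin k))
    (α β : ℝ → ℝ)
    (hψ : ContDiff ℝ 1 ψ) (hα : ContDiff ℝ 1 α) (hβ : ContDiff ℝ 1 β)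
    (x : EuclideanSpace ℝ (Fin (n - k))) (y : EuclideanSpace ℝ (Fin k)) (t : ℝ)
    (hB : Function.Bijective ⇑(fderiv ℝ (fun y' => ψ (x, y')) y))
    (hab : (α t) ^ 2 + (β t) ^ 2 > 0) :
    Function.Injective ⇑(fderiv ℝ (iota ψ α β) (x, y, t)) :=
  iota_fderiv_injective_general n k ψ α β hψ hα hβ x y t hB hab
end
end

section
/- Fix integers n > k ≥ 1. Let B : ℝ^k → ℝ^k be an invertible linear map, let P : ℝ^{n-k} → ℝ^k be a linear map, let y₀, z₀ ∈ ℝ^k, and let a, b, a', b' ∈ ℝ with a² + b² > 0. Define linear maps D : ℝ^{n-k} × ℝ^k × ℝ → ℝ^{n-k} × ℝ^k × ℝ^k × ℝ by D(u,v,s) = (u, a·v + s·a'·y₀, b·(P(u) + B(v)) + s·b'·z₀, s), and N : ℝ^k → ℝ^{n-k} × ℝ^k × ℝ^k × ℝ by N(w) = (0, −b·B⁻¹(w), a·w, 0). Then the ranges of D and N are complementary linear subspaces of ℝ^{n-k} × ℝ^k × ℝ^k × ℝ: their intersection is trivial and their sum is the whole space. -/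
/-- The ranges of the derivative `D` of the explicit embedding and of the explicit normal
trivialization `N` are complementary linear subspaces of `ℝ^{n-k} × ℝ^k × ℝ^k × ℝ`. -/
theorem range_D_isCompl_range_N (n k : ℕ) (hk : 1 ≤ k) (hkn : k < n)
    (B : EuclideanSpace ℝ (Fin k) ≃ₗ[ℝ] EuclideanSpace ℝ (Fin k))
    (P : EuclideanSpace ℝ (Fin (n - k)) →ₗ[ℝ] EuclideanSpace ℝ (Fin k))
    (y₀ z₀ : EuclideanSpace ℝ (Fin k)) (a b a' b' : ℝ) (hab : a ^ 2 + b ^ 2 > 0)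
    (D : (EuclideanSpace ℝ (Fin (n - k)) × EuclideanSpace ℝ (Fin k) × ℝ) →ₗ[ℝ]
      (EuclideanSpace ℝ (Fin (n - k)) × EuclideanSpace ℝ (Fin k) ×
        EuclideanSpace ℝ (Fin k) × ℝ))
    (N : EuclideanSpace ℝ (Fin k) →ₗ[ℝ]
      (EuclideanSpace ℝ (Fin (n - k)) × EuclideanSpace ℝ (Fin k) ×
        EuclideanSpace ℝ (Fin k) × ℝ))
    (hD : ∀ (u : EuclideanSpace ℝ (Fin (n - k))) (v : EuclideanSpace ℝ (Fin k)) (s : ℝ),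
      D (u, v, s) = (u, a • v + (s * a') • y₀, b • (P u + B v) + (s * b') • z₀, s))
    (hN : ∀ w : EuclideanSpace ℝ (Fin k), N w = (0, -(b • B.symm w), a • w, 0)) :
    IsCompl (LinearMap.range D) (LinearMap.range N) := by
  have hc : a ^ 2 + b ^ 2 ≠ 0 := ne_of_gt hab
  constructor
  · rw [Submodule.disjoint_def]
    rintro x ⟨⟨u, v, s⟩, rfl⟩ ⟨w, hw⟩
    rw [hD, hN] at hw
    rw [hD]
    simp only [Prod.mk.injEq] at hw
    obtain ⟨h1, h2, h3, h4⟩ := hw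
    subst h1 h4
    simp only [zero_mul, zero_smul, add_zero, map_zero, zero_add] at h2 h3
    have hbw : b • w = -(a • B v) := by
      have := congrArg B h2
      simp only [map_neg, map_smul, LinearEquiv.apply_symm_apply] at this
      rw [neg_eq_iff_eq_neg] at this
      exact this
    have key : (a ^ 2 + b ^ 2) • w = 0 := by
      calc (a ^ 2 + b ^ 2) • w = a • (a • w) + b • (b • w) := by module
        _ = a • (b • B v) + b • (-(a • B v)) := by rw [h3, hbw]
        _ = 0 := by module
    have hw0 : w = 0 := by
      rcases smul_eq_zero.mp key with h | h
      · exact absurd h hc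
      · exact h
    rw [hw0] at h2 h3
    simp only [map_zero, smul_zero, neg_zero] at h2 h3
    simp only [zero_mul, zero_smul, add_zero, map_zero, zero_add, Prod.mk_eq_zero]
    exact ⟨trivial, h2.symm, h3.symm, trivial⟩
  · rw [codisjoint_iff, Submodule.eq_top_iff']
    rintro ⟨p, q, r, t⟩
    rw [Submodule.mem_sup]
    set c := a ^ 2 + b ^ 2 with hcdef
    set q' : EuclideanSpace ℝ (Fin k) := q - (t * a') • y₀ with hq'
    set r' : EuclideanSpace ℝ (Fin k) := r - (t * b') • z₀ - b • P p with hr'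
    set x' : EuclideanSpace ℝ (Fin k) := c⁻¹ • (a • (B q') + b • r') with hx'
    set w' : EuclideanSpace ℝ (Fin k) := c⁻¹ • (a • r' - b • (B q')) with hw'
    refine ⟨D (p, B.symm x', t), ⟨_, rfl⟩, N w', ⟨_, rfl⟩, ?_⟩
    rw [hD, hN]
    have key1 : a • x' - b • w' = B q' := by
      rw [hx', hw']
      match_scalars <;> field_simp <;> ring
    have key2 : b • x' + a • w' = r' := by
      rw [hx', hw']
      match_scalars <;> field_simp <;> ring
    have e2 : a • B.symm x' + -(b • B.symm w') = q' := by
      rw [← map_smul, ← map_smul, ← map_neg, ← map_add, ← sub_eq_add_neg, key1,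
        LinearEquiv.symm_apply_apply]
    simp only [Prod.mk_add_mk, Prod.mk.injEq, LinearEquiv.apply_symm_apply]
    refine ⟨by simp, ?_, ?_, by simp⟩
    · calc a • B.symm x' + (t * a') • y₀ + -(b • B.symm w')
          = (a • B.symm x' + -(b • B.symm w')) + (t * a') • y₀ := by abel
        _ = q := by rw [e2, hq']; abel
    · calc b • (P p + x') + (t * b') • z₀ + a • w'
          = b • P p + (b • x' + a • w') + (t * b') • z₀ := by module
        _ = r := by rw [key2, hr']; abel
end
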